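/- In the polynomial ring F₃[x, y] over the field with three elements, the element (x + y)¹³ · x¹⁸ · y¹⁶ does not belong to the ideal generated by x²⁷ and y²⁷. -/

import Mathlib

/-! The ideal `(x²⁷, y²⁷)` is a monomial ideal, so each monomial occurring in one of its elements is
divisible by `x²⁷` or `y²⁷`. But `x²²y²⁵` occurs in `(x + y)¹³x¹⁸y¹⁶` with coefficient
`C(13, 4) = 715 ≡ 1 (mod 3)`. -/

open MvPolynomial

namespace MvPolynomial

variable {σ R : Type*} [CommSemiring R]

theorem coeff_eq_zero_of_mem_span_X_pow {q : ℕ} {f : MvPolynomial σ R}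
    (hf : f ∈ Ideal.span (Set.range fun i => X i ^ q)) {m : σ →₀ ℕ} (hm : ∀ i, m i < q) :
    coeff m f = 0 := by
  have hgen : (Set.range fun i => (X i ^ q : MvPolynomial σ R)) =
      (fun s => monomial s 1) '' Set.range fun i => Finsupp.single i q := by
    simp only [← Set.range_comp, Function.comp_def, X_pow_eq_monomial]
  rw [hgen, mem_ideal_span_monomial_image] at hf
  by_contra hne
  obtain ⟨_, ⟨i, rfl⟩, hle⟩ := hf m (mem_support_iff.mpr hne)
  exact (hm i).not_ge (by simpa using hle i)

theorem coeff_X_add_X_pow_mul_X_pow_mul_X_pow {n k l : ℕ} (hkl : k + l = n) (a b : ℕ) :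
    coeff (Finsupp.single (0 : Fin 2) (k + a) + Finsupp.single 1 (l + b))
      ((X 0 + X 1) ^ n * X 0 ^ a * X 1 ^ b : MvPolynomial (Fin 2) R) = (n.choose k : R) := by
  have hsplit : Finsupp.single (0 : Fin 2) (k + a) + Finsupp.single 1 (l + b) =
      (Finsupp.single 0 k + Finsupp.single 1 l) + (Finsupp.single 0 a + Finsupp.single 1 b) := by
    simp only [Finsupp.single_add]; abel
  rw [mul_assoc, X_pow_eq_monomial, X_pow_eq_monomial, monomial_mul, one_mul, hsplit,
    coeff_mul_monomial, mul_one, coeff_add_pow]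
  simp [hkl]

end MvPolynomial

/-- In `F₃[x, y]`, the element `(x + y)¹³ · x¹⁸ · y¹⁶` does not belong to the ideal
generated by `x²⁷` and `y²⁷`. -/
theorem stmt_9 :
    ((X 0 + X 1) ^ 13 * X 0 ^ 18 * X 1 ^ 16 : MvPolynomial (Fin 2) (ZMod 3)) ∉
      Ideal.span ({X 0 ^ 27, X 1 ^ 27} : Set (MvPolynomial (Fin 2) (ZMod 3))) := by
  intro h
  have hpair : ({X 0 ^ 27, X 1 ^ 27} : Set (MvPolynomial (Fin 2) (ZMod 3))) ⊆
      Set.range fun i => X i ^ 27 :=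
    Set.insert_subset_iff.mpr ⟨⟨0, rfl⟩, Set.singleton_subset_iff.mpr ⟨1, rfl⟩⟩
  have hzero := coeff_eq_zero_of_mem_span_X_pow (Ideal.span_mono hpair h)
    (m := Finsupp.single 0 (4 + 18) + Finsupp.single 1 (9 + 16)) (by simp [Fin.forall_fin_two])
  rw [coeff_X_add_X_pow_mul_X_pow_mul_X_pow (by norm_num : 4 + 9 = 13)] at hzero
  exact absurd hzero (by decide)
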